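/- arXiv:1612.09034 — 4 statements merged into one kernel-verified Lean document; each statement's English description precedes it below -/
import Mathlib

section
/- For every x ∈ ℝ^n and every step size t ∈ (0, 1/β], the minimizer x* of F lies in the ball B(x^{++}, (1 − αt)·‖G_t(x)‖²/α² − (2/α)·(F(x⁺) − F*)); that is, ‖x* − x^{++}‖² ≤ (1 − αt)·‖G_t(x)‖²/α² − (2/α)·(F(x⁺) − F*). -/
/-!
The descent lemma for `f` at `x⁺`, the strong-convexity lower bound for `f` at `y`, and the
optimality condition of the prox step, `⟪x - t∇f(x) - x⁺, y - x⁺⟫ ≤ t (h y - h x⁺)`, add up,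
once `βt ≤ 1`, to
`F(x⁺) + ⟪G_t(x), y - x⟫ + (t/2)‖G_t(x)‖² + (α/2)‖y - x‖² ≤ F(y)` for every `y`.
Completing the square in `y` and taking `y = x*` gives the ball.
-/

open scoped RealInnerProductSpace

def B {n : ℕ} (c : EuclideanSpace ℝ (Fin n)) (r2 : ℝ) : Set (EuclideanSpace ℝ (Fin n)) :=
  {y | ‖y - c‖ ^ 2 ≤ r2}

open Set Filter Topology

section ProximalGradient

variable {E : Type*} [NormedAddCommGroup E] [InnerProductSpace ℝ E]

theorem ConvexOn.add_le_of_hasDerivAt_comp_add_smul {g : E → ℝ} {x y : E} {m : ℝ}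
    (hg : ConvexOn ℝ univ g) (hm : HasDerivAt (fun s : ℝ => g (x + s • (y - x))) m 0) :
    g x + m ≤ g y := by
  have hline : ConvexOn ℝ univ (fun s : ℝ => g (x + s • (y - x))) := by
    simpa [Function.comp_def, AffineMap.lineMap_apply_module', add_comm] using
      hg.comp_affineMap (AffineMap.lineMap x y)
  have := hline.le_slope_of_hasDerivAt (mem_univ 0) (mem_univ 1) one_pos hm
  simp only [slope_def_field, one_smul, add_sub_cancel, zero_smul, add_zero, sub_zero,
    div_one] at this
  linarith

theorem ConvexOn.inner_sub_le_of_isMinOn_add_sq {g : E → ℝ} {v p : E} (hg : ConvexOn ℝ univ g)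
    (hp : IsMinOn (fun z => g z + ‖z - v‖ ^ 2 / 2) univ p) (y : E) :
    ⟪v - p, y - p⟫ ≤ g y - g p := by
  set A := g y - g p - ⟪v - p, y - p⟫
  have hA : ∀ s ∈ Ioc (0 : ℝ) 1, 0 ≤ A + s / 2 * ‖y - p‖ ^ 2 := by
    rintro s ⟨hs0, hs1⟩
    have hconvex : g (p + s • (y - p)) ≤ (1 - s) * g p + s * g y := by
      have := hg.2 (mem_univ p) (mem_univ y) (sub_nonneg.2 hs1) hs0.le (sub_add_cancel 1 s)
      rwa [show (1 - s) • p + s • y = p + s • (y - p) by module] at this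
    have hmin : g p + ‖p - v‖ ^ 2 / 2 ≤ g (p + s • (y - p)) + ‖p + s • (y - p) - v‖ ^ 2 / 2 :=
      isMinOn_iff.mp hp _ (mem_univ _)
    have hnorm : ‖p + s • (y - p) - v‖ ^ 2
        = ‖p - v‖ ^ 2 - 2 * s * ⟪v - p, y - p⟫ + s ^ 2 * ‖y - p‖ ^ 2 := by
      rw [show p + s • (y - p) - v = (p - v) + s • (y - p) by abel, norm_add_sq_real,
        real_inner_smul_right, norm_smul, mul_pow, Real.norm_eq_abs, sq_abs, ← neg_sub v p,
        inner_neg_left]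
      ring
    refine nonneg_of_mul_nonneg_right ?_ hs0
    linarith
  have hlim : Tendsto (fun s : ℝ => A + s / 2 * ‖y - p‖ ^ 2) (𝓝[>] 0) (𝓝 A) := by
    have hcont : Continuous (fun s : ℝ => A + s / 2 * ‖y - p‖ ^ 2) := by fun_prop
    simpa using (hcont.tendsto 0).mono_left nhdsWithin_le_nhds
  have := ge_of_tendsto hlim (mem_of_superset (Ioc_mem_nhdsGT one_pos) hA)
  linarith

variable [CompleteSpace E]

theorem HasGradientAt.hasDerivAt_comp_add_smul {f : E → ℝ} {f' x d : E} {s : ℝ}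
    (hf : HasGradientAt f f' (x + s • d)) :
    HasDerivAt (fun r : ℝ => f (x + r • d)) ⟪f', d⟫ s := by
  have hline : HasDerivAt (fun r : ℝ => x + r • d) d s := by
    simpa using ((hasDerivAt_id s).smul_const d).const_add x
  simpa [Function.comp_def, InnerProductSpace.toDual_apply_apply] using
    (hasGradientAt_iff_hasFDerivAt.mp hf).comp_hasDerivAt s hline

theorem add_inner_add_sq_le_of_convexOn_sub_sq {f : E → ℝ} {f' x : E} {α : ℝ}
    (hf : ConvexOn ℝ univ (fun z => f z - α / 2 * ‖z‖ ^ 2)) (hf' : HasGradientAt f f' x) (y : E) :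
    f x + ⟪f', y - x⟫ + α / 2 * ‖y - x‖ ^ 2 ≤ f y := by
  have hsq : HasDerivAt (fun s : ℝ => ‖x + s • (y - x)‖ ^ 2) (2 * ⟪x, y - x⟫) 0 := by
    simpa using (((hasDerivAt_id (0 : ℝ)).smul_const (y - x)).const_add x).norm_sq
  have := hf.add_le_of_hasDerivAt_comp_add_smul
    ((by simpa using hf' : HasGradientAt f f' (x + (0 : ℝ) • (y - x))).hasDerivAt_comp_add_smul.sub
      (hsq.const_mul (α / 2)))
  have hexp : ‖y‖ ^ 2 = ‖x‖ ^ 2 + 2 * ⟪x, y - x⟫ + ‖y - x‖ ^ 2 := by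
    rw [← norm_add_sq_real, add_sub_cancel]
  linear_combination this - α / 2 * hexp

theorem le_add_inner_add_sq_of_lipschitzWith_gradient {f : E → ℝ} {L : NNReal}
    (hf : Differentiable ℝ f) (hlip : LipschitzWith L (gradient f)) (x y : E) :
    f y ≤ f x + ⟪gradient f x, y - x⟫ + L / 2 * ‖y - x‖ ^ 2 := by
  set d := y - x
  set φ : ℝ → ℝ := fun s => f (x + s • d) - s * ⟪gradient f x, d⟫ - L / 2 * s ^ 2 * ‖d‖ ^ 2
  have hφ : ∀ s, HasDerivAt φ
      (⟪gradient f (x + s • d), d⟫ - ⟪gradient f x, d⟫ - L * s * ‖d‖ ^ 2) s := by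
    intro s
    refine ((((hf _).hasGradientAt.hasDerivAt_comp_add_smul).sub
      ((hasDerivAt_id s).mul_const ⟪gradient f x, d⟫)).sub
      (((hasDerivAt_pow 2 s).const_mul (L / 2 : ℝ)).mul_const (‖d‖ ^ 2))).congr_deriv ?_
    ring
  have hφ_nonpos : ∀ s, 0 ≤ s →
      ⟪gradient f (x + s • d), d⟫ - ⟪gradient f x, d⟫ - L * s * ‖d‖ ^ 2 ≤ 0 := by
    intro s hs
    have hgrad : ‖gradient f (x + s • d) - gradient f x‖ ≤ L * (s * ‖d‖) := by
      simpa [dist_eq_norm, norm_smul, abs_of_nonneg hs] using hlip.dist_le_mul (x + s • d) x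
    have := calc
      ⟪gradient f (x + s • d), d⟫ - ⟪gradient f x, d⟫
          = ⟪gradient f (x + s • d) - gradient f x, d⟫ := (inner_sub_left _ _ _).symm
      _ ≤ ‖gradient f (x + s • d) - gradient f x‖ * ‖d‖ := real_inner_le_norm _ _
      _ ≤ L * (s * ‖d‖) * ‖d‖ := by gcongr
    linarith
  have hanti : AntitoneOn φ (Icc 0 1) :=
    antitoneOn_of_hasDerivWithinAt_nonpos (convex_Icc 0 1)
      (fun s _ => (hφ s).continuousAt.continuousWithinAt) (fun s _ => (hφ s).hasDerivWithinAt)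
      (fun s hs => hφ_nonpos s (by rw [interior_Icc] at hs; exact hs.1.le))
  have := hanti (left_mem_Icc.2 zero_le_one) (right_mem_Icc.2 zero_le_one) zero_le_one
  simp only [φ, zero_smul, add_zero, one_smul, zero_mul, sub_zero, one_mul, d,
    add_sub_cancel] at this
  linarith

theorem add_inner_add_sq_le_of_isMinOn_prox {f h : E → ℝ} {α t : ℝ} {L : NNReal} {x xplus : E}
    (hsc : ConvexOn ℝ univ (fun z => f z - α / 2 * ‖z‖ ^ 2)) (hf : Differentiable ℝ f)
    (hlip : LipschitzWith L (gradient f)) (hconv : ConvexOn ℝ univ h) (ht : 0 < t)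
    (hLt : L * t ≤ 1)
    (hprox : IsMinOn (fun z => t * h z + ‖z - (x - t • gradient f x)‖ ^ 2 / 2) univ xplus)
    (y : E) :
    f xplus + h xplus + ⟪t⁻¹ • (x - xplus), y - x⟫ + t / 2 * ‖t⁻¹ • (x - xplus)‖ ^ 2
      + α / 2 * ‖y - x‖ ^ 2 ≤ f y + h y := by
  set G := t⁻¹ • (x - xplus)
  have hxplus : xplus = x - t • G := by simp [G, smul_smul, ht.ne']
  have hdescent := le_add_inner_add_sq_of_lipschitzWith_gradient hf hlip x xplus
  have hstrong := add_inner_add_sq_le_of_convexOn_sub_sq hsc (hf x).hasGradientAt y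
  have hproxy := (hconv.smul ht.le).inner_sub_le_of_isMinOn_add_sq hprox y
  set g := gradient f x
  have hstep : xplus - x = -(t • G) := by rw [hxplus]; abel
  rw [hstep, inner_neg_right, norm_neg, real_inner_smul_right, norm_smul, mul_pow,
    Real.norm_eq_abs, sq_abs] at hdescent
  have hprox_expand : ⟪x - t • g - xplus, y - xplus⟫
      = t * (⟪G, y - x⟫ + t * ‖G‖ ^ 2 - ⟪g, y - x⟫ - t * ⟪g, G⟫) := by
    rw [show x - t • g - xplus = t • (G - g) by rw [hxplus]; module,
      show y - xplus = (y - x) + t • G by rw [hxplus]; abel]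
    simp only [real_inner_smul_left, real_inner_smul_right, inner_add_right, inner_sub_left,
      real_inner_self_eq_norm_sq]
    ring
  rw [hprox_expand, smul_eq_mul, smul_eq_mul, ← mul_sub] at hproxy
  have hprox_div := le_of_mul_le_mul_left hproxy ht
  have hLt' : L * t * (t * ‖G‖ ^ 2) ≤ t * ‖G‖ ^ 2 := by
    simpa using mul_le_mul_of_nonneg_right hLt (by positivity : 0 ≤ t * ‖G‖ ^ 2)
  linarith

end ProximalGradient

theorem stmt_4_general (n : ℕ) (α β t : ℝ) (hα : 0 < α)
    (f h : EuclideanSpace ℝ (Fin n) → ℝ)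
    (hsc : ConvexOn ℝ Set.univ (fun z => f z - α / 2 * ‖z‖ ^ 2))
    (hf : Differentiable ℝ f)
    (hlip : LipschitzWith β.toNNReal (fun z => gradient f z))
    (hconv : ConvexOn ℝ Set.univ h)
    (ht : t ∈ Set.Ioc (0 : ℝ) (1 / β))
    (xstar : EuclideanSpace ℝ (Fin n))
    (x xplus : EuclideanSpace ℝ (Fin n))
    (hprox : IsMinOn (fun z => t * h z + ‖z - (x - t • gradient f x)‖ ^ 2 / 2)
      Set.univ xplus) :
    xstar ∈ B (x - α⁻¹ • (t⁻¹ • (x - xplus)))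
      ((1 - α * t) * ‖t⁻¹ • (x - xplus)‖ ^ 2 / α ^ 2
        - 2 / α * ((f xplus + h xplus) - (f xstar + h xstar))) := by
  obtain ⟨ht0, htβ⟩ := ht
  have hβ : 0 < β := one_div_pos.mp (ht0.trans_le htβ)
  have hβt : (β.toNNReal : ℝ) * t ≤ 1 := by
    rw [Real.coe_toNNReal β hβ.le, mul_comm, ← le_div_iff₀ hβ]
    exact htβ
  have key := add_inner_add_sq_le_of_isMinOn_prox hsc hf hlip hconv ht0 hβt hprox xstar
  set G := t⁻¹ • (x - xplus)
  have hsquare : ‖xstar - (x - α⁻¹ • G)‖ ^ 2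
      = ‖xstar - x‖ ^ 2 + 2 / α * ⟪G, xstar - x⟫ + ‖G‖ ^ 2 / α ^ 2 := by
    rw [show xstar - (x - α⁻¹ • G) = (xstar - x) + α⁻¹ • G by abel, norm_add_sq_real,
      real_inner_smul_right, norm_smul, mul_pow, Real.norm_eq_abs, sq_abs, real_inner_comm]
    ring
  change ‖xstar - (x - α⁻¹ • G)‖ ^ 2 ≤ _
  calc ‖xstar - (x - α⁻¹ • G)‖ ^ 2
      = 2 / α * (α / 2 * ‖xstar - x‖ ^ 2 + ⟪G, xstar - x⟫) + ‖G‖ ^ 2 / α ^ 2 := by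
        rw [hsquare]; field_simp
    _ ≤ 2 / α * (f xstar + h xstar - (f xplus + h xplus) - t / 2 * ‖G‖ ^ 2)
        + ‖G‖ ^ 2 / α ^ 2 := by
        gcongr; linarith
    _ = _ := by field_simp; ring

/-- the minimizer `x*` of `F = f + h` lies in the ball
`B(x^{++}, (1 − αt)‖G_t(x)‖²/α² − (2/α)(F(x⁺) − F*))`, where
`xplus = Prox_{th}(x − t∇f(x))`, `G_t(x) = t⁻¹ • (x - xplus)` and
`x^{++} = x − G_t(x)/α`. -/
theorem stmt_4 (n : ℕ) (α β t : ℝ) (hα : 0 < α) (hαβ : α ≤ β)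
    (f h : EuclideanSpace ℝ (Fin n) → ℝ)
    (hsc : ConvexOn ℝ Set.univ (fun z => f z - α / 2 * ‖z‖ ^ 2))
    (hf : Differentiable ℝ f)
    (hlip : LipschitzWith β.toNNReal (fun z => gradient f z))
    (hconv : ConvexOn ℝ Set.univ h) (hlsc : LowerSemicontinuous h)
    (ht : t ∈ Set.Ioc (0 : ℝ) (1 / β))
    (xstar : EuclideanSpace ℝ (Fin n))
    (hmin : IsMinOn (fun z => f z + h z) Set.univ xstar)
    (x xplus : EuclideanSpace ℝ (Fin n))
    (hprox : IsMinOn (fun z => t * h z + ‖z - (x - t • gradient f x)‖ ^ 2 / 2)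
      Set.univ xplus) :
    xstar ∈ B (x - α⁻¹ • (t⁻¹ • (x - xplus)))
      ((1 - α * t) * ‖t⁻¹ • (x - xplus)‖ ^ 2 / α ^ 2
        - 2 / α * ((f xplus + h xplus) - (f xstar + h xstar))) :=
  stmt_4_general n α β t hα f h hsc hf hlip hconv ht xstar x xplus hprox
end

section
/- Fix t ∈ (0, 1/β] and x, c ∈ ℝ^n with x ≠ c. If φ̄_{t,x,c}(0) < 0, then there exists a unique s ∈ (0, ∞) such that φ̄_{t,x,c}(s) = 0. -/
/-!
The map `T z = z⁺ = Prox_{th}(z - t∇f(z))` is a contraction with factor `ρ = √(1 - tα) < 1`: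
the proximal map is nonexpansive, and for `t ≤ 1/β` the gradient step contracts, by strong
monotonicity of `∇f` together with its `1/β`-cocoercivity (Baillon–Haddad, from the descent lemma).
On the line `z_s = x + s(c - x)` we have `φ̄(s) = ⟪T z_s, x - c⟫ - ⟪z_s, x - c⟫`; the second term
grows with slope `‖x - c‖²` while the first moves at rate at most `ρ‖x - c‖²`. So `φ̄` is
continuous and increases at rate at least `(1 - ρ)‖x - c‖² > 0`, and the intermediate value
theorem gives exactly one zero in `(0, ∞)`.
-/

open scoped RealInnerProductSpace NNReal
open Set Filter Topology

section FirstOrder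

variable {E : Type*} [NormedAddCommGroup E] [InnerProductSpace ℝ E] [CompleteSpace E]
  {f : E → ℝ} {f' : E → E}

lemma hasDerivAt_comp_lineMap_of_hasGradientAt (hf : ∀ x, HasGradientAt f (f' x) x)
    (x y : E) (τ : ℝ) :
    HasDerivAt (fun σ => f (AffineMap.lineMap x y σ)) ⟪f' (AffineMap.lineMap x y τ), y - x⟫ τ := by
  have := (hasGradientAt_iff_hasFDerivAt.mp (hf _)).comp_hasDerivAt τ
    (AffineMap.hasDerivAt_lineMap (a := x) (b := y))
  simpa [Function.comp_def, InnerProductSpace.toDual_apply_apply] using this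

lemma HasGradientAt.sub_half_mul_norm_sq {x g : E} (hf : HasGradientAt f g x) (m : ℝ) :
    HasGradientAt (fun z => f z - m / 2 * ‖z‖ ^ 2) (g - m • x) x := by
  rw [hasGradientAt_iff_hasFDerivAt] at hf ⊢
  refine (hf.sub ((hasStrictFDerivAt_norm_sq x).hasFDerivAt.const_mul (m / 2))).congr_fderiv ?_
  ext v
  simp only [sub_apply, smul_apply, InnerProductSpace.toDual_apply_apply, coe_innerSL_apply,
    inner_sub_left, real_inner_smul_left, smul_eq_mul, nsmul_eq_mul]
  ring

lemma ConvexOn.add_inner_gradient_le (hconv : ConvexOn ℝ univ f)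
    (hf : ∀ x, HasGradientAt f (f' x) x) (x y : E) :
    f x + ⟪f' x, y - x⟫ ≤ f y := by
  have hline : ConvexOn ℝ univ (fun σ => f (AffineMap.lineMap x y σ)) :=
    hconv.comp_affineMap (AffineMap.lineMap x y)
  have hderiv := hasDerivAt_comp_lineMap_of_hasGradientAt hf x y 0
  have := hline.le_slope_of_hasDerivAt (mem_univ 0) (mem_univ 1) one_pos (by simpa using hderiv)
  simp only [slope_def_field, AffineMap.lineMap_apply_one, AffineMap.lineMap_apply_zero, sub_zero,
    div_one] at this
  linarith

lemma ConvexOn.inner_gradient_sub_nonneg (hconv : ConvexOn ℝ univ f)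
    (hf : ∀ x, HasGradientAt f (f' x) x) (x y : E) :
    0 ≤ ⟪f' y - f' x, y - x⟫ := by
  have hxy := hconv.add_inner_gradient_le hf x y
  have hyx := hconv.add_inner_gradient_le hf y x
  rw [← neg_sub y x, inner_neg_right] at hyx
  rw [inner_sub_left]
  linarith

lemma StrongConvexOn.mul_norm_sq_le_inner_gradient_sub {m : ℝ} (hconv : StrongConvexOn univ m f)
    (hf : ∀ x, HasGradientAt f (f' x) x) (x y : E) :
    m * ‖y - x‖ ^ 2 ≤ ⟪f' y - f' x, y - x⟫ := by
  have := (strongConvexOn_iff_convex.mp hconv).inner_gradient_sub_nonneg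
    (fun z => (hf z).sub_half_mul_norm_sq m) x y
  rwa [show f' y - m • y - (f' x - m • x) = (f' y - f' x) - m • (y - x) by module,
    inner_sub_left, real_inner_smul_left, real_inner_self_eq_norm_sq, sub_nonneg] at this

lemma le_add_inner_gradient_add_of_lipschitzWith {K : ℝ≥0} (hf : ∀ x, HasGradientAt f (f' x) x)
    (hlip : LipschitzWith K f') (x y : E) :
    f y ≤ f x + ⟪f' x, y - x⟫ + K / 2 * ‖y - x‖ ^ 2 := by
  set u : ℝ → ℝ := fun σ =>
    f (AffineMap.lineMap x y σ) - σ * ⟪f' x, y - x⟫ - K / 2 * σ ^ 2 * ‖y - x‖ ^ 2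
  have hu : ∀ σ, HasDerivAt u
      (⟪f' (AffineMap.lineMap x y σ) - f' x, y - x⟫ - K * σ * ‖y - x‖ ^ 2) σ := by
    intro σ
    have := ((hasDerivAt_comp_lineMap_of_hasGradientAt hf x y σ).sub
      ((hasDerivAt_id σ).mul_const ⟪f' x, y - x⟫)).sub
      (((hasDerivAt_pow 2 σ).const_mul (K / 2 : ℝ)).mul_const (‖y - x‖ ^ 2))
    refine this.congr_deriv ?_
    rw [inner_sub_left]
    ring
  have hanti : AntitoneOn u (Ici 0) := by
    refine antitoneOn_of_deriv_nonpos (convex_Ici 0)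
      (fun σ _ => (hu σ).continuousAt.continuousWithinAt)
      (fun σ _ => (hu σ).differentiableAt.differentiableWithinAt) (fun σ hσ => ?_)
    rw [interior_Ici] at hσ
    rw [(hu σ).deriv, sub_nonpos]
    have hdist : ‖AffineMap.lineMap x y σ - x‖ = σ * ‖y - x‖ := by
      rw [AffineMap.lineMap_apply_module, show (1 - σ) • x + σ • y - x = σ • (y - x) by module,
        norm_smul, Real.norm_of_nonneg hσ.le]
    calc ⟪f' (AffineMap.lineMap x y σ) - f' x, y - x⟫
        ≤ ‖f' (AffineMap.lineMap x y σ) - f' x‖ * ‖y - x‖ := real_inner_le_norm _ _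
      _ ≤ K * ‖AffineMap.lineMap x y σ - x‖ * ‖y - x‖ := by
          gcongr
          simpa [dist_eq_norm] using hlip.dist_le_mul (AffineMap.lineMap x y σ) x
      _ = K * σ * ‖y - x‖ ^ 2 := by rw [hdist]; ring
  have := hanti (mem_Ici.mpr le_rfl) (mem_Ici.mpr zero_le_one) zero_le_one
  simp only [u, AffineMap.lineMap_apply_one, AffineMap.lineMap_apply_zero] at this
  linarith

lemma ConvexOn.add_inner_gradient_add_norm_sq_le {K : ℝ≥0} (hK : 0 < K)
    (hconv : ConvexOn ℝ univ f) (hf : ∀ x, HasGradientAt f (f' x) x) (hlip : LipschitzWith K f')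
    (x y : E) :
    f x + ⟪f' x, y - x⟫ + ‖f' y - f' x‖ ^ 2 / (2 * K) ≤ f y := by
  set Δ := f' y - f' x
  -- bound `f w` below by the tangent at `x` and above by the descent bound at `y`
  set w := y - (K : ℝ)⁻¹ • Δ
  have hlow := hconv.add_inner_gradient_le hf x w
  have hup := le_add_inner_gradient_add_of_lipschitzWith hf hlip y w
  rw [show w - x = (y - x) - (K : ℝ)⁻¹ • Δ by module, inner_sub_right,
    real_inner_smul_right] at hlow
  rw [show w - y = -((K : ℝ)⁻¹ • Δ) by module, inner_neg_right, real_inner_smul_right, norm_neg,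
    norm_smul, Real.norm_of_nonneg (by positivity)] at hup
  have hΔ : ⟪f' y, Δ⟫ - ⟪f' x, Δ⟫ = ‖Δ‖ ^ 2 := by
    rw [← inner_sub_left, real_inner_self_eq_norm_sq]
  have hK' : (0 : ℝ) < K := hK
  field_simp at hlow hup ⊢
  nlinarith

lemma ConvexOn.norm_gradient_sub_sq_le {K : ℝ≥0} (hconv : ConvexOn ℝ univ f)
    (hf : ∀ x, HasGradientAt f (f' x) x) (hlip : LipschitzWith K f') (x y : E) :
    ‖f' y - f' x‖ ^ 2 ≤ K * ⟪f' y - f' x, y - x⟫ := by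
  rcases eq_zero_or_pos K with rfl | hK
  · simp [show f' y = f' x by simpa using hlip.dist_le_mul y x]
  have hxy := hconv.add_inner_gradient_add_norm_sq_le hK hf hlip x y
  have hyx := hconv.add_inner_gradient_add_norm_sq_le hK hf hlip y x
  rw [← neg_sub y x, inner_neg_right, ← norm_neg, neg_sub] at hyx
  have hK' : (0 : ℝ) < K := hK
  rw [inner_sub_left]
  field_simp at hxy hyx
  nlinarith

end FirstOrder

section Contraction

variable {E : Type*} [NormedAddCommGroup E] [InnerProductSpace ℝ E]

lemma norm_sub_smul_sub_sq_le {F : E → E} {m t : ℝ} {K : ℝ≥0}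
    (hmono : ∀ x y, m * ‖y - x‖ ^ 2 ≤ ⟪F y - F x, y - x⟫)
    (hcoco : ∀ x y, ‖F y - F x‖ ^ 2 ≤ K * ⟪F y - F x, y - x⟫) (ht : 0 ≤ t) (htK : t * K ≤ 1)
    (x y : E) :
    ‖(y - t • F y) - (x - t • F x)‖ ^ 2 ≤ (1 - t * m) * ‖y - x‖ ^ 2 := by
  have hexp : ‖(y - t • F y) - (x - t • F x)‖ ^ 2
      = ‖y - x‖ ^ 2 - 2 * t * ⟪F y - F x, y - x⟫ + t ^ 2 * ‖F y - F x‖ ^ 2 := by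
    rw [show (y - t • F y) - (x - t • F x) = (y - x) - t • (F y - F x) by module,
      norm_sub_sq_real, real_inner_smul_right, norm_smul, Real.norm_of_nonneg ht,
      real_inner_comm]
    ring
  have hpos : 0 ≤ ⟪F y - F x, y - x⟫ := by
    by_contra! hneg
    have hzero : ‖F y - F x‖ ^ 2 ≤ 0 :=
      (hcoco x y).trans (mul_nonpos_of_nonneg_of_nonpos K.2 hneg.le)
    rw [sq_nonpos_iff, norm_eq_zero] at hzero
    simp [hzero] at hneg
  rw [hexp]
  nlinarith [mul_le_mul_of_nonneg_left (hcoco x y) (sq_nonneg t),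
    mul_le_mul_of_nonneg_left (hmono x y) ht, mul_nonneg (mul_nonneg ht (sub_nonneg.mpr htK)) hpos]

lemma lipschitzWith_sub_smul {F : E → E} {m t : ℝ} {K : ℝ≥0}
    (hmono : ∀ x y, m * ‖y - x‖ ^ 2 ≤ ⟪F y - F x, y - x⟫)
    (hcoco : ∀ x y, ‖F y - F x‖ ^ 2 ≤ K * ⟪F y - F x, y - x⟫) (ht : 0 ≤ t) (htK : t * K ≤ 1) :
    LipschitzWith (NNReal.sqrt (1 - t * m).toNNReal) (fun z => z - t • F z) := by
  refine LipschitzWith.of_dist_le_mul fun y x => ?_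
  rw [dist_eq_norm, dist_eq_norm, Real.coe_sqrt, Real.coe_toNNReal']
  refine (pow_le_pow_iff_left₀ (norm_nonneg _) (by positivity) two_ne_zero).mp ?_
  rw [mul_pow, Real.sq_sqrt (le_max_right _ _)]
  exact (norm_sub_smul_sub_sq_le hmono hcoco ht htK x y).trans
    (by gcongr; exact le_max_left _ _)

lemma IsMinOn.inner_sub_le_of_convexOn {g : E → ℝ} (hg : ConvexOn ℝ univ g) {v p : E}
    (hp : IsMinOn (fun u => g u + ‖u - v‖ ^ 2 / 2) univ p) (w : E) :
    ⟪v - p, w - p⟫ ≤ g w - g p := by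
  have hsmall : ∀ l ∈ Ioc (0 : ℝ) 1, 0 ≤ (g w - g p - ⟪v - p, w - p⟫) + l * (‖w - p‖ ^ 2 / 2) := by
    rintro l ⟨hl0, hl1⟩
    have hmin : g p + ‖p - v‖ ^ 2 / 2 ≤ g (p + l • (w - p)) + ‖p + l • (w - p) - v‖ ^ 2 / 2 :=
      hp (mem_univ _)
    have hcv := hg.2 (mem_univ p) (mem_univ w) (sub_nonneg.mpr hl1) hl0.le (by ring)
    rw [show (1 - l) • p + l • w = p + l • (w - p) by module, smul_eq_mul, smul_eq_mul] at hcv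
    have hnorm : ‖p + l • (w - p) - v‖ ^ 2
        = ‖p - v‖ ^ 2 - 2 * l * ⟪v - p, w - p⟫ + l ^ 2 * ‖w - p‖ ^ 2 := by
      rw [show p + l • (w - p) - v = -(v - p) + l • (w - p) by module, norm_add_sq_real,
        norm_neg, inner_neg_left, real_inner_smul_right, norm_smul, Real.norm_of_nonneg hl0.le,
        norm_sub_rev v p]
      ring
    rw [hnorm] at hmin
    have : 0 ≤ l * ((g w - g p - ⟪v - p, w - p⟫) + l * (‖w - p‖ ^ 2 / 2)) := by nlinarith
    exact nonneg_of_mul_nonneg_right this hl0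
  have hlim : Tendsto (fun l : ℝ => (g w - g p - ⟪v - p, w - p⟫) + l * (‖w - p‖ ^ 2 / 2))
      (𝓝[>] 0) (𝓝 (g w - g p - ⟪v - p, w - p⟫)) := by
    refine tendsto_nhdsWithin_of_tendsto_nhds ?_
    simpa using ((continuous_id.mul continuous_const).const_add _).tendsto (0 : ℝ)
  exact sub_nonneg.mp (ge_of_tendsto hlim (eventually_of_mem (Ioc_mem_nhdsGT one_pos) hsmall))

lemma lipschitzWith_one_of_isMinOn {g : E → ℝ} (hg : ConvexOn ℝ univ g) {P : E → E}
    (hP : ∀ v, IsMinOn (fun u => g u + ‖u - v‖ ^ 2 / 2) univ (P v)) :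
    LipschitzWith 1 P := by
  refine LipschitzWith.of_dist_le_mul fun v₁ v₂ => ?_
  rw [dist_eq_norm, dist_eq_norm, NNReal.coe_one, one_mul]
  have h₁ := (hP v₁).inner_sub_le_of_convexOn hg (P v₂)
  have h₂ := (hP v₂).inner_sub_le_of_convexOn hg (P v₁)
  have hfirm : ‖P v₁ - P v₂‖ ^ 2 ≤ ⟪v₁ - v₂, P v₁ - P v₂⟫ := by
    rw [← neg_sub (P v₁) (P v₂), inner_neg_right] at h₁
    rw [← real_inner_self_eq_norm_sq, ← sub_nonneg, ← inner_sub_left]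
    rw [show v₁ - v₂ - (P v₁ - P v₂) = (v₁ - P v₁) - (v₂ - P v₂) by abel, inner_sub_left]
    linarith
  nlinarith [real_inner_le_norm (v₁ - v₂) (P v₁ - P v₂), norm_nonneg (P v₁ - P v₂),
    norm_nonneg (v₁ - v₂)]

end Contraction

section Line

variable {E : Type*} [NormedAddCommGroup E] [InnerProductSpace ℝ E]

/-- The paper's `φ̄_{t,x,c}` when `T z = z⁺`. -/
def lineResidual (T : E → E) (x c : E) (s : ℝ) : ℝ :=
  ⟪T (x + s • (c - x)) - (x + s • (c - x)), x - c⟫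

lemma LipschitzWith.continuous_lineResidual {T : E → E} {ρ : ℝ≥0} (hT : LipschitzWith ρ T)
    (x c : E) : Continuous (lineResidual T x c) := by
  have := hT.continuous
  unfold lineResidual
  fun_prop

lemma LipschitzWith.mul_sub_le_lineResidual_sub {T : E → E} {ρ : ℝ≥0} (hT : LipschitzWith ρ T)
    (x c : E) {a b : ℝ} (hab : a ≤ b) :
    (1 - ρ) * ‖x - c‖ ^ 2 * (b - a) ≤ lineResidual T x c b - lineResidual T x c a := by
  set za := x + a • (c - x)
  set zb := x + b • (c - x)
  have hdiff : lineResidual T x c b - lineResidual T x c a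
      = ⟪T zb - T za, x - c⟫ + (b - a) * ‖x - c‖ ^ 2 := by
    rw [lineResidual, lineResidual, ← inner_sub_left,
      show T zb - zb - (T za - za) = (T zb - T za) + (b - a) • (x - c) by module,
      inner_add_left, real_inner_smul_left, real_inner_self_eq_norm_sq]
  have hdist : ‖zb - za‖ = (b - a) * ‖x - c‖ := by
    rw [show zb - za = (b - a) • (c - x) by module, norm_smul,
      Real.norm_of_nonneg (sub_nonneg.mpr hab), norm_sub_rev]
  have hinner : -(ρ * ((b - a) * ‖x - c‖ ^ 2)) ≤ ⟪T zb - T za, x - c⟫ := by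
    have hT' : ‖T zb - T za‖ ≤ ρ * ‖zb - za‖ := by
      simpa [dist_eq_norm] using hT.dist_le_mul zb za
    have := neg_abs_le ⟪T zb - T za, x - c⟫
    have := abs_real_inner_le_norm (T zb - T za) (x - c)
    rw [hdist] at hT'
    nlinarith [norm_nonneg (x - c)]
  rw [hdiff]
  linarith

end Line

lemma existsUnique_pos_eq_zero_of_mul_sub_le {φ : ℝ → ℝ} {κ : ℝ} (hφ : Continuous φ)
    (hκ : 0 < κ) (hgrowth : ∀ a b, a ≤ b → κ * (b - a) ≤ φ b - φ a) (h0 : φ 0 < 0) :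
    ∃! s, 0 < s ∧ φ s = 0 := by
  have hmono : StrictMono φ := fun a b hab => by nlinarith [hgrowth a b hab.le]
  have hS : 0 ≤ -φ 0 / κ := div_nonneg (by linarith) hκ.le
  have hφS : 0 ≤ φ (-φ 0 / κ) := by
    have := hgrowth 0 _ hS
    rw [sub_zero, mul_div_cancel₀ _ hκ.ne'] at this
    linarith
  obtain ⟨s, hs, hφs⟩ := intermediate_value_Icc hS hφ.continuousOn ⟨h0.le, hφS⟩
  have hs0 : 0 < s := lt_of_le_of_ne hs.1 (by rintro rfl; linarith)
  exact ⟨s, ⟨hs0, hφs⟩, fun s' hs' => hmono.injective (hs'.2.trans hφs.symm)⟩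

theorem stmt_10_general (n : ℕ) (α β t : ℝ) (hα : 0 < α)
    (f h : EuclideanSpace ℝ (Fin n) → ℝ)
    (hsc : ConvexOn ℝ Set.univ (fun z => f z - α / 2 * ‖z‖ ^ 2))
    (hf : Differentiable ℝ f)
    (hlip : LipschitzWith β.toNNReal (fun z => gradient f z))
    (hconv : ConvexOn ℝ Set.univ h)
    (ht : t ∈ Set.Ioc (0 : ℝ) (1 / β))
    (P : EuclideanSpace ℝ (Fin n) → EuclideanSpace ℝ (Fin n))
    (hP : ∀ v, IsMinOn (fun u => t * h u + ‖u - v‖ ^ 2 / 2) Set.univ (P v))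
    (x c : EuclideanSpace ℝ (Fin n)) (hxc : x ≠ c)
    (φbar : ℝ → ℝ)
    (hφbar : ∀ s : ℝ,
      φbar s = ⟪P ((x + s • (c - x)) - t • gradient f (x + s • (c - x))) - (x + s • (c - x)),
        x - c⟫)
    (h0 : φbar 0 < 0) :
    ∃! s : ℝ, 0 < s ∧ φbar s = 0 := by
  obtain ⟨ht0, htβ⟩ := ht
  have hβ : 0 < β := one_div_pos.mp (ht0.trans_le htβ)
  have hgrad : ∀ z, HasGradientAt f (gradient f z) z := fun z => (hf z).hasGradientAt
  have hstrong : StrongConvexOn univ α f := strongConvexOn_iff_convex.mpr hsc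
  have hstep := lipschitzWith_sub_smul (hstrong.mul_norm_sq_le_inner_gradient_sub hgrad)
    ((UniformConvexOn.convexOn hstrong fun r => by positivity).norm_gradient_sub_sq_le hgrad hlip)
    ht0.le (by rw [Real.coe_toNNReal _ hβ.le]; exact (le_div_iff₀ hβ).mp htβ)
  have hprox := lipschitzWith_one_of_isMinOn (g := fun u => t * h u) (hconv.smul ht0.le) hP
  have hT := hprox.comp hstep
  rw [one_mul] at hT
  have hρ : NNReal.sqrt (1 - t * α).toNNReal < 1 := by
    simpa using NNReal.sqrt_lt_sqrt.mpr (Real.toNNReal_lt_one.mpr (by nlinarith : 1 - t * α < 1))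
  have hφ : φbar = lineResidual (P ∘ fun z => z - t • gradient f z) x c := funext hφbar
  subst hφ
  exact existsUnique_pos_eq_zero_of_mul_sub_le (hT.continuous_lineResidual x c)
    (mul_pos (sub_pos.mpr (mod_cast hρ)) (pow_pos (norm_pos_iff.mpr (sub_ne_zero.mpr hxc)) 2))
    (fun a b hab => hT.mul_sub_le_lineResidual_sub x c hab) h0

/-- if `φ̄_{t,x,c}(0) < 0` then `φ̄_{t,x,c}` has a unique root in
`(0, ∞)`, where `φ̄_{t,x,c}(s) = ⟨z⁺ − z, x − c⟩` at `z = x + s(c − x)`,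
`z⁺ = P (z − t∇f(z))` and `P v = Prox_{th}(v)`. -/
theorem stmt_10 (n : ℕ) (α β t : ℝ) (hα : 0 < α) (hαβ : α ≤ β)
    (f h : EuclideanSpace ℝ (Fin n) → ℝ)
    (hsc : ConvexOn ℝ Set.univ (fun z => f z - α / 2 * ‖z‖ ^ 2))
    (hf : Differentiable ℝ f)
    (hlip : LipschitzWith β.toNNReal (fun z => gradient f z))
    (hconv : ConvexOn ℝ Set.univ h) (hlsc : LowerSemicontinuous h)
    (ht : t ∈ Set.Ioc (0 : ℝ) (1 / β))
    (P : EuclideanSpace ℝ (Fin n) → EuclideanSpace ℝ (Fin n))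
    (hP : ∀ v, IsMinOn (fun u => t * h u + ‖u - v‖ ^ 2 / 2) Set.univ (P v))
    (x c : EuclideanSpace ℝ (Fin n)) (hxc : x ≠ c)
    (φbar : ℝ → ℝ)
    (hφbar : ∀ s : ℝ,
      φbar s = ⟪P ((x + s • (c - x)) - t • gradient f (x + s • (c - x))) - (x + s • (c - x)),
        x - c⟫)
    (h0 : φbar 0 < 0) :
    ∃! s : ℝ, 0 < s ∧ φbar s = 0 :=
  stmt_10_general n α β t hα f h hsc hf hlip hconv ht P hP x c hxc φbar hφbar h0
end

section
/- Let t ∈ (0, 1/β]. Suppose c, w ∈ ℝ^n and R² ∈ ℝ satisfy ‖x* − c‖² ≤ R² − (2/α)·(F(w) − F*), and suppose x ∈ ℝ^n satisfies F(x⁺) ≤ F(w) − (t/2)·‖G_t(x)‖² and ‖x^{++} − c‖² ≥ ‖G_t(x)‖²/α². Then there exists c' ∈ ℝ^n such that ‖x* − c'‖² ≤ (1 − √(αt))·R² − (2/α)·(F(x⁺) − F*). -/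
/-!
The prox-gradient step satisfies the fundamental inequality
`F y ≥ F x⁺ + ⟪G, y - x⟫ + (t/2)‖G‖² + (α/2)‖y - x‖²`, obtained by adding the descent lemma for
`f` (this is where `βt ≤ 1` enters), the first-order bound of strong convexity of `f` at `x`, and
the optimality condition of the proximal step. Completing the square at `y = x*` puts `x*` in the
ball around `x⁺⁺` of squared radius `(1 - αt)‖G‖²/α² - (2/α)(F x⁺ - F*)`, and the hypotheses put
it in the ball around `c` of squared radius `R² - αt‖G‖²/α² - (2/α)(F x⁺ - F*)`. The centres are
at distance at least `‖G‖/α`, so by the identity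
`‖y - ((1 - λ)a + λb)‖² = (1 - λ)‖y - a‖² + λ‖y - b‖² - λ(1 - λ)‖b - a‖²`
the point `c' = (1 - λ)c + λx⁺⁺` with `λ = √(αt)` works.
-/

open scoped RealInnerProductSpace NNReal
open Set AffineMap

section Convex
variable {E : Type*} [NormedAddCommGroup E] [NormedSpace ℝ E] {s : Set E}

theorem ConvexOn.le_sub_of_hasFDerivAt {g : E → ℝ} {g' : E →L[ℝ] ℝ} {a b : E}
    (hg : ConvexOn ℝ s g) (ha : a ∈ s) (hb : b ∈ s) (hd : HasFDerivAt g g' a) :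
    g' (b - a) ≤ g b - g a := by
  have hline : HasDerivAt (g ∘ (lineMap a b : ℝ → E)) (g' (b - a)) 0 :=
    hd.comp_hasDerivAt_of_eq 0 hasDerivAt_lineMap (by simp)
  simpa [slope] using (hg.comp_affineMap (lineMap a b)).le_slope_of_hasDerivAt
    (by simpa using ha) (by simpa using hb) zero_lt_one hline

theorem IsMinOn.sub_le_of_convexOn_add {u q : E → ℝ} {q' : E →L[ℝ] ℝ} {p z : E}
    (hmin : IsMinOn (fun w => u w + q w) s p) (hu : ConvexOn ℝ s u) (hp : p ∈ s) (hz : z ∈ s)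
    (hq : HasFDerivAt q q' p) : u p - u z ≤ q' (z - p) := by
  -- The chord bound on `u` along `[p, z]` turns the minimality of `u + q` at `p` into the
  -- minimality at `0` of `ψ` on `[0, 1]`, whose right derivative there is then nonnegative.
  set ψ : ℝ → ℝ := fun σ => q (lineMap p z σ) - σ * (u p - u z)
  have hψ : HasDerivAt ψ (q' (z - p) - (u p - u z)) 0 :=
    (hq.comp_hasDerivAt_of_eq 0 hasDerivAt_lineMap (by simp)).sub (hasDerivAt_mul_const _)
  have hψmin : IsMinOn ψ (Icc 0 1) 0 := by
    intro σ hσ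
    have hchord : u (lineMap p z σ) ≤ (1 - σ) * u p + σ * u z := by
      simpa [lineMap_apply_module] using
        hu.2 hp hz (sub_nonneg.2 hσ.2) hσ.1 (sub_add_cancel 1 σ)
    have := hmin (hu.1.lineMap_mem hp hz hσ)
    simp only [mem_ofPred_eq, ψ, lineMap_apply_zero, zero_mul, sub_zero] at this ⊢
    linarith
  have := hψmin.localize.hasFDerivWithinAt_nonneg hψ.hasFDerivAt.hasFDerivWithinAt
    (y := 1) (mem_posTangentConeAt_of_segment_subset (by simp [segment_eq_Icc]))
  simpa using this

end Convex

section InnerProduct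
variable {E : Type*} [NormedAddCommGroup E] [InnerProductSpace ℝ E]

theorem StrongConvexOn.add_fderiv_add_sq_le {f : E → ℝ} {f' : E →L[ℝ] ℝ} {s : Set E} {m : ℝ}
    {a b : E} (hf : StrongConvexOn s m f) (ha : a ∈ s) (hb : b ∈ s) (hd : HasFDerivAt f f' a) :
    f a + f' (b - a) + m / 2 * ‖b - a‖ ^ 2 ≤ f b := by
  have hq := hd.sub (((hasFDerivAt_id a).norm_sq).const_mul (m / 2))
  have := (strongConvexOn_iff_convex.1 hf).le_sub_of_hasFDerivAt ha hb hq
  have hsq : ‖b‖ ^ 2 = ‖a‖ ^ 2 + 2 * ⟪a, b - a⟫ + ‖b - a‖ ^ 2 := by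
    rw [← norm_add_sq_real, add_sub_cancel]
  simp only [sub_apply, smul_apply, ContinuousLinearMap.comp_apply, innerSL_apply_apply, id_eq,
    smul_eq_mul, nsmul_eq_mul, Nat.cast_ofNat, ContinuousLinearMap.id_apply] at this
  rw [hsq] at this
  linarith

theorem IsMinOn.mul_sub_le_inner_of_prox {h : E → ℝ} {t : ℝ} {y p : E}
    (hp : IsMinOn (fun z => t * h z + ‖z - y‖ ^ 2 / 2) univ p) (hh : ConvexOn ℝ univ h)
    (ht : 0 ≤ t) (z : E) : t * (h p - h z) ≤ ⟪p - y, z - p⟫ := by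
  have hq := ((hasFDerivAt_id p).sub_const y).norm_sq.mul_const (2⁻¹ : ℝ)
  simp_rw [div_eq_mul_inv] at hp
  have := hp.sub_le_of_convexOn_add (u := fun z => t * h z) (hh.smul ht) (mem_univ p)
    (mem_univ z) hq
  simp only [id_eq, ContinuousLinearMap.comp_id, smul_apply, coe_innerSL_apply, nsmul_eq_mul,
    Nat.cast_ofNat, smul_eq_mul, inv_mul_cancel_left₀ (two_ne_zero (α := ℝ))] at this
  linarith

theorem norm_sub_lineMap_sq (y a b : E) (r : ℝ) :
    ‖y - lineMap a b r‖ ^ 2 = (1 - r) * ‖y - a‖ ^ 2 + r * ‖y - b‖ ^ 2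
      - r * (1 - r) * ‖b - a‖ ^ 2 := by
  have hl : y - lineMap a b r = (y - a) - r • (b - a) := by
    rw [lineMap_apply_module']; abel
  have hb : y - b = (y - a) - (b - a) := by abel
  rw [hl, hb]
  generalize y - a = u
  generalize b - a = v
  rw [norm_sub_sq_real, norm_sub_sq_real, norm_smul, inner_smul_right, Real.norm_eq_abs, mul_pow,
    sq_abs]
  ring

theorem norm_sub_lineMap_sq_le_of_two_balls {y a b : E} {r R g ε : ℝ} (hr₀ : 0 ≤ r) (hr₁ : r ≤ 1)
    (ha : ‖y - a‖ ^ 2 ≤ R - r ^ 2 * g - ε) (hb : ‖y - b‖ ^ 2 ≤ (1 - r ^ 2) * g - ε)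
    (hab : g ≤ ‖b - a‖ ^ 2) :
    ‖y - lineMap a b r‖ ^ 2 ≤ (1 - r) * R - ε := by
  rw [norm_sub_lineMap_sq]
  have h₁ := mul_le_mul_of_nonneg_left ha (sub_nonneg.2 hr₁)
  have h₂ := mul_le_mul_of_nonneg_left hb hr₀
  have h₃ := mul_le_mul_of_nonneg_left hab (mul_nonneg hr₀ (sub_nonneg.2 hr₁))
  linarith

section Complete
variable [CompleteSpace E]

theorem le_add_inner_gradient_add_sq_of_lipschitzWith {f : E → ℝ} {K : ℝ≥0}
    (hf : Differentiable ℝ f) (hlip : LipschitzWith K (gradient f)) (a b : E) :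
    f b ≤ f a + ⟪gradient f a, b - a⟫ + K / 2 * ‖b - a‖ ^ 2 := by
  set φ : ℝ → ℝ := fun s => f (lineMap a b s) - s * ⟪gradient f a, b - a⟫
  set B : ℝ → ℝ := fun s => f a + K / 2 * s ^ 2 * ‖b - a‖ ^ 2
  have hφ (s : ℝ) :
      HasDerivAt φ (⟪gradient f (lineMap a b s), b - a⟫ - ⟪gradient f a, b - a⟫) s := by
    have := ((hf _).hasFDerivAt.comp_hasDerivAt s (hasDerivAt_lineMap (a := a) (b := b))).sub
      (hasDerivAt_mul_const ⟪gradient f a, b - a⟫)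
    rwa [← inner_gradient_left] at this
  have hB (s : ℝ) : HasDerivAt B (K * s * ‖b - a‖ ^ 2) s := by
    refine ((((hasDerivAt_pow 2 s).const_mul (K / 2 : ℝ)).mul_const (‖b - a‖ ^ 2)).const_add
      (f a)).congr_deriv ?_
    push_cast
    ring
  have hbound (s : ℝ) (hs : 0 ≤ s) :
      ⟪gradient f (lineMap a b s), b - a⟫ - ⟪gradient f a, b - a⟫ ≤ K * s * ‖b - a‖ ^ 2 := by
    have hL : ‖gradient f (lineMap a b s) - gradient f a‖ ≤ K * (s * ‖b - a‖) := by
      simpa [← dist_eq_norm, dist_lineMap_left, abs_of_nonneg hs, dist_comm a b]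
        using hlip.dist_le_mul (lineMap a b s) a
    calc ⟪gradient f (lineMap a b s), b - a⟫ - ⟪gradient f a, b - a⟫
        = ⟪gradient f (lineMap a b s) - gradient f a, b - a⟫ := (inner_sub_left ..).symm
      _ ≤ ‖gradient f (lineMap a b s) - gradient f a‖ * ‖b - a‖ := real_inner_le_norm _ _
      _ ≤ K * (s * ‖b - a‖) * ‖b - a‖ := by gcongr
      _ = K * s * ‖b - a‖ ^ 2 := by ring
  have := image_le_of_deriv_right_le_deriv_boundary (a := 0) (b := 1)
    (fun s _ => (hφ s).continuousAt.continuousWithinAt) (fun s _ => (hφ s).hasDerivWithinAt)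
    (by simp [φ, B]) (fun s _ => (hB s).continuousAt.continuousWithinAt)
    (fun s _ => (hB s).hasDerivWithinAt) (fun s hs => hbound s hs.1) (right_mem_Icc.2 zero_le_one)
  simp only [φ, B, lineMap_apply_one] at this
  linarith

section ProxGrad
variable {f h : E → ℝ} {α t : ℝ} {K : ℝ≥0} {x xplus : E}

theorem add_inner_proxGrad_add_sq_le (hsc : StrongConvexOn univ α f) (hf : Differentiable ℝ f)
    (hlip : LipschitzWith K (gradient f)) (hh : ConvexOn ℝ univ h) (ht : 0 < t) (hKt : K * t ≤ 1)
    (hprox : IsMinOn (fun z => t * h z + ‖z - (x - t • gradient f x)‖ ^ 2 / 2) univ xplus)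
    (y : E) :
    f xplus + h xplus + ⟪t⁻¹ • (x - xplus), y - x⟫ + t / 2 * ‖t⁻¹ • (x - xplus)‖ ^ 2
      + α / 2 * ‖y - x‖ ^ 2 ≤ f y + h y := by
  obtain ⟨G, rfl⟩ : ∃ G, xplus = x - t • G :=
    ⟨t⁻¹ • (x - xplus), by rw [smul_inv_smul₀ ht.ne', sub_sub_cancel]⟩
  rw [sub_sub_cancel, inv_smul_smul₀ ht.ne']
  set g := gradient f x
  have hdesc := le_add_inner_gradient_add_sq_of_lipschitzWith hf hlip x (x - t • G)
  have hstrong := hsc.add_fderiv_add_sq_le (mem_univ x) (mem_univ y) (hf x).hasFDerivAt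
  have hp := hprox.mul_sub_le_inner_of_prox hh ht.le y
  rw [← inner_gradient_left] at hstrong
  have e₁ : x - t • G - x = -(t • G) := by abel
  have e₂ : x - t • G - (x - t • g) = t • (g - G) := by rw [smul_sub]; abel
  have e₃ : y - (x - t • G) = (y - x) + t • G := by abel
  rw [e₁, inner_neg_right, inner_smul_right, norm_neg, norm_smul, Real.norm_eq_abs, abs_of_pos ht,
    mul_pow] at hdesc
  rw [e₂, e₃, inner_smul_left, inner_add_right, inner_smul_right, inner_sub_left, inner_sub_left,
    real_inner_self_eq_norm_sq] at hp
  have hK : K * t ^ 2 / 2 * ‖G‖ ^ 2 ≤ t / 2 * ‖G‖ ^ 2 := by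
    have := mul_le_mul_of_nonneg_right hKt (by positivity : 0 ≤ t / 2 * ‖G‖ ^ 2)
    linarith
  have hp' : h (x - t • G) - h y ≤ ⟪g, y - x⟫ + t * ⟪g, G⟫ - ⟪G, y - x⟫ - t * ‖G‖ ^ 2 := by
    refine le_of_mul_le_mul_left ?_ ht
    simp only [RCLike.conj_to_real] at hp
    linarith
  linarith

theorem norm_sub_sq_le_of_proxGrad (hα : 0 < α) (hsc : StrongConvexOn univ α f)
    (hf : Differentiable ℝ f) (hlip : LipschitzWith K (gradient f)) (hh : ConvexOn ℝ univ h)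
    (ht : 0 < t) (hKt : K * t ≤ 1)
    (hprox : IsMinOn (fun z => t * h z + ‖z - (x - t • gradient f x)‖ ^ 2 / 2) univ xplus)
    (y : E) :
    ‖y - (x - α⁻¹ • t⁻¹ • (x - xplus))‖ ^ 2 ≤ (1 - α * t) * (‖t⁻¹ • (x - xplus)‖ ^ 2 / α ^ 2)
      - 2 / α * ((f xplus + h xplus) - (f y + h y)) := by
  have key := add_inner_proxGrad_add_sq_le hsc hf hlip hh ht hKt hprox y
  set G := t⁻¹ • (x - xplus)
  have e : y - (x - α⁻¹ • G) = (y - x) + α⁻¹ • G := by abel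
  calc ‖y - (x - α⁻¹ • G)‖ ^ 2 = ‖y - x‖ ^ 2 + 2 / α * ⟪G, y - x⟫ + ‖G‖ ^ 2 / α ^ 2 := by
        rw [e, norm_add_sq_real, inner_smul_right, norm_smul, Real.norm_eq_abs,
          abs_of_pos (inv_pos.2 hα), real_inner_comm]
        ring
    _ ≤ ‖y - x‖ ^ 2 + 2 / α * ((f y + h y) - (f xplus + h xplus) - t / 2 * ‖G‖ ^ 2
          - α / 2 * ‖y - x‖ ^ 2) + ‖G‖ ^ 2 / α ^ 2 := by
        gcongr
        linarith
    _ = _ := by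
        field_simp
        ring

end ProxGrad

end Complete

end InnerProduct

theorem stmt_12_general (n : ℕ) (α β t : ℝ) (hα : 0 < α) (hαβ : α ≤ β)
    (f h : EuclideanSpace ℝ (Fin n) → ℝ)
    (hsc : ConvexOn ℝ Set.univ (fun z => f z - α / 2 * ‖z‖ ^ 2))
    (hf : Differentiable ℝ f)
    (hlip : LipschitzWith β.toNNReal (fun z => gradient f z))
    (hconv : ConvexOn ℝ Set.univ h)
    (ht : t ∈ Set.Ioc (0 : ℝ) (1 / β))
    (xstar : EuclideanSpace ℝ (Fin n))
    (c w x xplus : EuclideanSpace ℝ (Fin n)) (R2 : ℝ)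
    (hprox : IsMinOn (fun z => t * h z + ‖z - (x - t • gradient f x)‖ ^ 2 / 2)
      Set.univ xplus)
    (hball : ‖xstar - c‖ ^ 2 ≤ R2 - 2 / α * ((f w + h w) - (f xstar + h xstar)))
    (hdec : f xplus + h xplus ≤ (f w + h w) - t / 2 * ‖t⁻¹ • (x - xplus)‖ ^ 2)
    (hfar : ‖(x - α⁻¹ • (t⁻¹ • (x - xplus))) - c‖ ^ 2 ≥ ‖t⁻¹ • (x - xplus)‖ ^ 2 / α ^ 2) :
    ∃ c' : EuclideanSpace ℝ (Fin n),
      ‖xstar - c'‖ ^ 2 ≤ (1 - Real.sqrt (α * t)) * R2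
        - 2 / α * ((f xplus + h xplus) - (f xstar + h xstar)) := by
  obtain ⟨ht₀, htβ⟩ := ht
  have hβ : 0 < β := hα.trans_le hαβ
  have hβt : β * t ≤ 1 := by rwa [le_div_iff₀ hβ, mul_comm] at htβ
  have hKt : (β.toNNReal : ℝ) * t ≤ 1 := by rwa [Real.coe_toNNReal _ hβ.le]
  have hr : Real.sqrt (α * t) ^ 2 = α * t := Real.sq_sqrt (by positivity)
  have hr₁ : Real.sqrt (α * t) ≤ 1 := Real.sqrt_le_one.2 (by nlinarith)
  have hnear := norm_sub_sq_le_of_proxGrad hα (strongConvexOn_iff_convex.2 hsc) hf hlip hconv ht₀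
    hKt hprox xstar
  set G := t⁻¹ • (x - xplus)
  refine ⟨lineMap c (x - α⁻¹ • G) (Real.sqrt (α * t)),
    norm_sub_lineMap_sq_le_of_two_balls (Real.sqrt_nonneg _) hr₁ ?_ (by rwa [hr]) hfar⟩
  have e : α * t * (‖G‖ ^ 2 / α ^ 2) = 2 / α * (t / 2 * ‖G‖ ^ 2) := by
    field_simp
  have hgap : 0 ≤ 2 / α * ((f w + h w) - t / 2 * ‖G‖ ^ 2 - (f xplus + h xplus)) :=
    mul_nonneg (by positivity) (by linarith)
  rw [hr, e]
  linarith

/-- one-step shrinkage of GeoPG. If `‖x* − c‖² ≤ R² − (2/α)(F(w) − F*)`,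
`F(x⁺) ≤ F(w) − (t/2)‖G_t(x)‖²` and `‖x^{++} − c‖² ≥ ‖G_t(x)‖²/α²`, then there is `c'`
with `‖x* − c'‖² ≤ (1 − √(αt))R² − (2/α)(F(x⁺) − F*)`. Here `F = f + h`,
`xplus = Prox_{th}(x − t∇f(x))`, `G_t(x) = t⁻¹ • (x - xplus)`,
`x^{++} = x − G_t(x)/α`. -/
theorem stmt_12 (n : ℕ) (α β t : ℝ) (hα : 0 < α) (hαβ : α ≤ β)
    (f h : EuclideanSpace ℝ (Fin n) → ℝ)
    (hsc : ConvexOn ℝ Set.univ (fun z => f z - α / 2 * ‖z‖ ^ 2))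
    (hf : Differentiable ℝ f)
    (hlip : LipschitzWith β.toNNReal (fun z => gradient f z))
    (hconv : ConvexOn ℝ Set.univ h) (hlsc : LowerSemicontinuous h)
    (ht : t ∈ Set.Ioc (0 : ℝ) (1 / β))
    (xstar : EuclideanSpace ℝ (Fin n))
    (hmin : IsMinOn (fun z => f z + h z) Set.univ xstar)
    (c w x xplus : EuclideanSpace ℝ (Fin n)) (R2 : ℝ)
    (hprox : IsMinOn (fun z => t * h z + ‖z - (x - t • gradient f x)‖ ^ 2 / 2)
      Set.univ xplus)
    (hball : ‖xstar - c‖ ^ 2 ≤ R2 - 2 / α * ((f w + h w) - (f xstar + h xstar)))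
    (hdec : f xplus + h xplus ≤ (f w + h w) - t / 2 * ‖t⁻¹ • (x - xplus)‖ ^ 2)
    (hfar : ‖(x - α⁻¹ • (t⁻¹ • (x - xplus))) - c‖ ^ 2 ≥ ‖t⁻¹ • (x - xplus)‖ ^ 2 / α ^ 2) :
    ∃ c' : EuclideanSpace ℝ (Fin n),
      ‖xstar - c'‖ ^ 2 ≤ (1 - Real.sqrt (α * t)) * R2
        - 2 / α * ((f xplus + h xplus) - (f xstar + h xstar)) :=
  stmt_12_general n α β t hα hαβ f h hsc hf hlip hconv ht xstar c w x xplus R2 hprox hball hdec hfar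
end

section
/- (Convergence of GeoPG with backtracking.) Let {t_k}_{k≥0} be positive step sizes with α·t_k ≤ 1 for all k, let {x_k}_{k≥0}, {c_k}_{k≥0} ⊆ ℝ^n and {R_k²}_{k≥0} ⊆ ℝ be sequences with c_0 = x_0 − G_{t_0}(x_0)/α and R_0² = (1 − α t_0)·‖G_{t_0}(x_0)‖²/α². Assume for every k ≥ 0 the line-search condition f(x_k^{+,t_k}) ≤ f(x_k) − t_k·⟨∇f(x_k), G_{t_k}(x_k)⟩ + (t_k/2)·‖G_{t_k}(x_k)‖² holds, and for every k ≥ 1: (a) F(x_k^{+,t_k}) ≤ F(x_{k−1}^{+,t_{k−1}}) − (t_k/2)·‖G_{t_k}(x_k)‖² and ‖x_k − G_{t_k}(x_k)/α − c_{k−1}‖² ≥ ‖G_{t_k}(x_k)‖²/α²; (b) R_k² = (1 − √(α t_k))·R_{k−1}² and, for every δ ≥ 0, B(c_{k−1}, R_{k−1}² − (t_k/α)·‖G_{t_k}(x_k)‖² − δ) ∩ B(x_k − G_{t_k}(x_k)/α, (1 − α t_k)·‖G_{t_k}(x_k)‖²/α² − δ) ⊆ B(c_k, R_k² − δ). Then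 for every k ≥ 0, x* ∈ B(c_k, R_k²), and ‖x* − c_k‖² ≤ (∏_{i=1}^{k} (1 − √(α t_i)))·R_0² ≤ (1 − √(α·min_{0≤i≤k} t_i))^k · R_0². -/
/-!
A proximal-gradient step `x ↦ x⁺ = x - t G` that passes the line search satisfies, for every `z`,
`‖z - (x - G/α)‖² ≤ (1 - αt)‖G‖²/α² - (2/α)(F(x⁺) - F(z))`: add the strong-convexity lower bound
for `f` at `x`, the line-search upper bound for `f(x⁺)`, and the optimality inequality of the prox.
For `z = x*` this puts `x*` in the ball around `x_k - G_k/α` shrunk by `δ_k = (2/α)(F(x_k⁺) - F*)`.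
Since `F(x_k⁺)` decreases by at least `(t_k/2)‖G_k‖²`, induction on `k` with the ball-intersection
hypothesis at `δ = δ_k` gives `‖x* - c_k‖² ≤ R_k² - δ_k`; unrolling the recursion for `R_k²` and
bounding every step size below by the smallest one yields the rates.
-/

open scoped RealInnerProductSpace

open Set Filter Topology

section FirstOrder

variable {E : Type*} [NormedAddCommGroup E] [NormedSpace ℝ E]

theorem ConvexOn.add_fderiv_le {g : E → ℝ} {g' : E →L[ℝ] ℝ} {x : E}
    (hg : ConvexOn ℝ univ g) (hd : HasFDerivAt g g' x) (y : E) :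
    g x + g' (y - x) ≤ g y := by
  have hφ : ConvexOn ℝ univ (g ∘ AffineMap.lineMap (k := ℝ) x y) := by
    simpa using hg.comp_affineMap (AffineMap.lineMap x y : ℝ →ᵃ[ℝ] E)
  have hφ' : HasDerivAt (g ∘ AffineMap.lineMap (k := ℝ) x y) (g' (y - x)) 0 := by
    simpa using hd.comp_hasDerivAt_of_eq (0 : ℝ) AffineMap.hasDerivAt_lineMap (by simp)
  have := hφ.le_slope_of_hasDerivAt (mem_univ 0) (mem_univ 1) one_pos hφ'
  simp only [slope_def_field, Function.comp_apply, AffineMap.lineMap_apply_zero,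
    AffineMap.lineMap_apply_one, sub_zero, div_one] at this
  linarith

end FirstOrder

section InnerProduct

variable {E : Type*} [NormedAddCommGroup E] [InnerProductSpace ℝ E]

theorem add_inner_gradient_add_sq_le_of_convexOn_sub {f : E → ℝ} {α : ℝ} [CompleteSpace E]
    {x : E} (hsc : ConvexOn ℝ univ (fun z => f z - α / 2 * ‖z‖ ^ 2))
    (hf : DifferentiableAt ℝ f x) (z : E) :
    f x + ⟪gradient f x, z - x⟫ + α / 2 * ‖z - x‖ ^ 2 ≤ f z := by
  have hd := (hasGradientAt_iff_hasFDerivAt.mp hf.hasGradientAt).sub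
    ((hasStrictFDerivAt_norm_sq x).hasFDerivAt.const_mul (α / 2))
  have key := hsc.add_fderiv_le hd z
  have hz : ‖z‖ ^ 2 = ‖x‖ ^ 2 + 2 * ⟪x, z - x⟫ + ‖z - x‖ ^ 2 := by
    rw [← norm_add_sq_real, add_sub_cancel]
  simp only [sub_apply, InnerProductSpace.toDual_apply_apply,
    smul_apply, innerSL_apply_apply, smul_eq_mul, nsmul_eq_mul] at key
  rw [hz] at key
  linarith

theorem nonneg_of_forall_add_mul_nonneg {a b : ℝ} (h : ∀ l ∈ Ioc (0 : ℝ) 1, 0 ≤ a + l * b) :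
    0 ≤ a := by
  have hlim : Tendsto (fun l : ℝ => a + l * b) (𝓝[>] 0) (𝓝 a) :=
    ((continuous_const.add (continuous_id.mul continuous_const)).tendsto' 0 a
      (by simp)).mono_left nhdsWithin_le_nhds
  exact ge_of_tendsto hlim (eventually_of_mem (Ioc_mem_nhdsGT one_pos) h)

theorem inner_sub_le_of_isMinOn_prox {h : E → ℝ} {s : ℝ} {v p : E}
    (hconv : ConvexOn ℝ univ h) (hs : 0 ≤ s)
    (hp : IsMinOn (fun u => s * h u + ‖u - v‖ ^ 2 / 2) univ p) (z : E) :
    ⟪v - p, z - p⟫ ≤ s * (h z - h p) := by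
  suffices 0 ≤ s * (h z - h p) - ⟪v - p, z - p⟫ by linarith
  refine nonneg_of_forall_add_mul_nonneg (b := ‖z - p‖ ^ 2 / 2) fun l ⟨hl0, hl1⟩ => ?_
  have hmin : s * h p + ‖p - v‖ ^ 2 / 2
      ≤ s * h (p + l • (z - p)) + ‖p + l • (z - p) - v‖ ^ 2 / 2 := hp (mem_univ _)
  have hconvex : h (p + l • (z - p)) ≤ (1 - l) * h p + l * h z := by
    have := hconv.2 (mem_univ p) (mem_univ z) (by linarith : 0 ≤ 1 - l) hl0.le (by ring)
    rwa [show (1 - l) • p + l • z = p + l • (z - p) by module, smul_eq_mul, smul_eq_mul] at this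
  have hexpand : ‖p + l • (z - p) - v‖ ^ 2
      = ‖p - v‖ ^ 2 - 2 * l * ⟪v - p, z - p⟫ + l ^ 2 * ‖z - p‖ ^ 2 := by
    rw [show p + l • (z - p) - v = (p - v) + l • (z - p) by abel, norm_add_sq_real,
      real_inner_smul_right, norm_smul, mul_pow, Real.norm_eq_abs, sq_abs,
      ← neg_sub v p, inner_neg_left]
    ring
  have : 0 ≤ l * (s * (h z - h p) - ⟪v - p, z - p⟫ + l * (‖z - p‖ ^ 2 / 2)) := by
    nlinarith [mul_le_mul_of_nonneg_left hconvex hs]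
  exact (mul_nonneg_iff_of_pos_left hl0).1 (by linarith)

theorem sq_norm_sub_le_of_proxGrad_step [CompleteSpace E] {f h : E → ℝ} {α t : ℝ} {x p G : E}
    (hα : 0 < α) (ht : 0 < t) (hsc : ConvexOn ℝ univ (fun z => f z - α / 2 * ‖z‖ ^ 2))
    (hf : DifferentiableAt ℝ f x) (hconv : ConvexOn ℝ univ h)
    (hp : IsMinOn (fun u => t * h u + ‖u - (x - t • gradient f x)‖ ^ 2 / 2) univ p)
    (hG : x - p = t • G)
    (hline : f p ≤ f x - t * ⟪gradient f x, G⟫ + t / 2 * ‖G‖ ^ 2) (z : E) :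
    ‖z - (x - α⁻¹ • G)‖ ^ 2
      ≤ (1 - α * t) * ‖G‖ ^ 2 / α ^ 2 - 2 / α * (f p + h p - (f z + h z)) := by
  have hstrong := add_inner_gradient_add_sq_le_of_convexOn_sub hsc hf z
  have hprox := inner_sub_le_of_isMinOn_prox hconv ht.le hp z
  rw [show x - t • gradient f x - p = t • (G - gradient f x) by rw [smul_sub, ← hG]; abel,
    show z - p = (z - x) + t • G by rw [← hG]; abel, inner_add_right, real_inner_smul_left,
    real_inner_smul_left, real_inner_smul_right, inner_sub_left, inner_sub_left,
    real_inner_self_eq_norm_sq, ← mul_add, mul_le_mul_iff_right₀ ht] at hprox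
  have hexpand : ‖z - (x - α⁻¹ • G)‖ ^ 2
      = ‖z - x‖ ^ 2 + 2 * α⁻¹ * ⟪G, z - x⟫ + α⁻¹ ^ 2 * ‖G‖ ^ 2 := by
    rw [show z - (x - α⁻¹ • G) = (z - x) + α⁻¹ • G by abel, norm_add_sq_real,
      real_inner_smul_right, real_inner_comm, norm_smul, mul_pow, Real.norm_eq_abs, sq_abs]
    ring
  have hgap : f p + h p - (f z + h z)
      ≤ -(α / 2 * ‖z - x‖ ^ 2) - ⟪G, z - x⟫ - t / 2 * ‖G‖ ^ 2 := by
    linarith [real_inner_comm (gradient f x) G]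
  have hid : ‖z - x‖ ^ 2 + 2 * α⁻¹ * ⟪G, z - x⟫ + α⁻¹ ^ 2 * ‖G‖ ^ 2
      + 2 / α * (-(α / 2 * ‖z - x‖ ^ 2) - ⟪G, z - x⟫ - t / 2 * ‖G‖ ^ 2)
      = (1 - α * t) * ‖G‖ ^ 2 / α ^ 2 := by
    field_simp
    ring
  rw [hexpand]
  linarith [mul_le_mul_of_nonneg_left hgap (by positivity : (0 : ℝ) ≤ 2 / α)]

end InnerProduct

theorem eq_prod_Icc_mul_of_forall_eq_mul {M : Type*} [CommMonoid M] {R a : ℕ → M}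
    (h : ∀ k, 1 ≤ k → R k = a k * R (k - 1)) (k : ℕ) :
    R k = (∏ i ∈ Finset.Icc 1 k, a i) * R 0 := by
  induction k with
  | zero => simp
  | succ k ih =>
    rw [h (k + 1) k.succ_pos, Nat.add_sub_cancel, ih, Finset.prod_Icc_succ_top k.succ_pos,
      mul_comm _ (a _), mul_assoc]

theorem prod_one_sub_sqrt_le_pow_inf' {α : ℝ} {t : ℕ → ℝ} (hα : 0 ≤ α)
    (htα : ∀ i, α * t i ≤ 1) (k : ℕ) :
    ∏ i ∈ Finset.Icc 1 k, (1 - Real.sqrt (α * t i))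
      ≤ (1 - Real.sqrt (α * Finset.inf' (Finset.range (k + 1))
          (Finset.nonempty_range_iff.mpr k.succ_ne_zero) t)) ^ k := by
  have hle : ∀ i ∈ Finset.Icc 1 k, 1 - Real.sqrt (α * t i)
      ≤ 1 - Real.sqrt (α * Finset.inf' (Finset.range (k + 1))
          (Finset.nonempty_range_iff.mpr k.succ_ne_zero) t) := fun i hi => by
    have hi' : i ∈ Finset.range (k + 1) := Finset.mem_range_succ_iff.2 (Finset.mem_Icc.1 hi).2
    gcongr
    exact Finset.inf'_le t hi'
  calc _ ≤ ∏ _i ∈ Finset.Icc 1 k, (1 - Real.sqrt (α * Finset.inf' (Finset.range (k + 1))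
          (Finset.nonempty_range_iff.mpr k.succ_ne_zero) t)) :=
        Finset.prod_le_prod (fun i _ => sub_nonneg.2 (Real.sqrt_le_one.2 (htα i))) hle
    _ = _ := by simp

theorem stmt_14_general (n : ℕ) (α : ℝ) (hα : 0 < α)
    (f h : EuclideanSpace ℝ (Fin n) → ℝ)
    (hsc : ConvexOn ℝ Set.univ (fun z => f z - α / 2 * ‖z‖ ^ 2))
    (hf : Differentiable ℝ f)
    (hconv : ConvexOn ℝ Set.univ h)
    (xstar : EuclideanSpace ℝ (Fin n))
    (hmin : IsMinOn (fun z => f z + h z) Set.univ xstar)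
    (P : ℝ → EuclideanSpace ℝ (Fin n) → EuclideanSpace ℝ (Fin n))
    (hP : ∀ s : ℝ, 0 < s → ∀ v, IsMinOn (fun u => s * h u + ‖u - v‖ ^ 2 / 2)
      Set.univ (P s v))
    (t : ℕ → ℝ) (htpos : ∀ k, 0 < t k) (htα : ∀ k, α * t k ≤ 1)
    (x c xp G : ℕ → EuclideanSpace ℝ (Fin n)) (R2 : ℕ → ℝ)
    (hxp : ∀ k, xp k = P (t k) (x k - t k • gradient f (x k)))
    (hG : ∀ k, G k = (t k)⁻¹ • (x k - xp k))
    (hc0 : c 0 = x 0 - α⁻¹ • G 0)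
    (hR0 : R2 0 = (1 - α * t 0) * ‖G 0‖ ^ 2 / α ^ 2)
    (hline : ∀ k, f (xp k) ≤ f (x k) - t k * ⟪gradient f (x k), G k⟫
      + t k / 2 * ‖G k‖ ^ 2)
    (ha : ∀ k, 1 ≤ k →
      f (xp k) + h (xp k) ≤ (f (xp (k - 1)) + h (xp (k - 1))) - t k / 2 * ‖G k‖ ^ 2
        ∧ ‖x k - α⁻¹ • G k - c (k - 1)‖ ^ 2 ≥ ‖G k‖ ^ 2 / α ^ 2)
    (hb1 : ∀ k, 1 ≤ k → R2 k = (1 - Real.sqrt (α * t k)) * R2 (k - 1))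
    (hb2 : ∀ k, 1 ≤ k → ∀ δ : ℝ, 0 ≤ δ →
      B (c (k - 1)) (R2 (k - 1) - t k / α * ‖G k‖ ^ 2 - δ)
          ∩ B (x k - α⁻¹ • G k) ((1 - α * t k) * ‖G k‖ ^ 2 / α ^ 2 - δ)
        ⊆ B (c k) (R2 k - δ)) :
    ∀ k : ℕ,
      xstar ∈ B (c k) (R2 k)
        ∧ ‖xstar - c k‖ ^ 2 ≤ (∏ i ∈ Finset.Icc 1 k, (1 - Real.sqrt (α * t i))) * R2 0
        ∧ (∏ i ∈ Finset.Icc 1 k, (1 - Real.sqrt (α * t i))) * R2 0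
            ≤ (1 - Real.sqrt (α * Finset.inf' (Finset.range (k + 1))
                (Finset.nonempty_range_iff.mpr k.succ_ne_zero) t)) ^ k * R2 0 := by
  have hF : ∀ z, f xstar + h xstar ≤ f z + h z := fun z => hmin (mem_univ z)
  set gap : ℕ → ℝ := fun k => 2 / α * (f (xp k) + h (xp k) - (f xstar + h xstar))
  have gap_nonneg : ∀ k, 0 ≤ gap k := fun k => mul_nonneg (by positivity) (sub_nonneg.2 (hF _))
  have step : ∀ k, ‖xstar - (x k - α⁻¹ • G k)‖ ^ 2
      ≤ (1 - α * t k) * ‖G k‖ ^ 2 / α ^ 2 - gap k := fun k =>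
    sq_norm_sub_le_of_proxGrad_step hα (htpos k) hsc (hf _) hconv
      (hxp k ▸ hP _ (htpos k) _)
      (by rw [hG k, smul_smul, mul_inv_cancel₀ (htpos k).ne', one_smul]) (hline k) xstar
  have shrink : ∀ k, ‖xstar - c k‖ ^ 2 ≤ R2 k - gap k := by
    intro k
    induction k with
    | zero => simpa [hc0, hR0] using step 0
    | succ k ih =>
      have hdesc : gap (k + 1) + t (k + 1) / α * ‖G (k + 1)‖ ^ 2 ≤ gap k := by
        have hdecrease := (ha (k + 1) k.succ_pos).1
        rw [Nat.add_sub_cancel] at hdecrease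
        have hscale : 2 / α * (t (k + 1) / 2 * ‖G (k + 1)‖ ^ 2)
            = t (k + 1) / α * ‖G (k + 1)‖ ^ 2 := by ring
        simp only [gap]
        linarith [mul_le_mul_of_nonneg_left hdecrease (by positivity : (0 : ℝ) ≤ 2 / α)]
      refine hb2 (k + 1) k.succ_pos _ (gap_nonneg _) ⟨?_, step (k + 1)⟩
      change ‖xstar - c k‖ ^ 2 ≤ R2 k - t (k + 1) / α * ‖G (k + 1)‖ ^ 2 - gap (k + 1)
      linarith
  have mem : ∀ k, xstar ∈ B (c k) (R2 k) := fun k =>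
    (shrink k).trans (sub_le_self _ (gap_nonneg k))
  intro k
  refine ⟨mem k, eq_prod_Icc_mul_of_forall_eq_mul hb1 k ▸ mem k, ?_⟩
  exact mul_le_mul_of_nonneg_right (prod_one_sub_sqrt_le_pow_inf' hα.le htα k)
    ((sq_nonneg _).trans (mem 0))

/-- convergence of GeoPG with backtracking. Here `P s v = Prox_{sh}(v)`
for step size `s > 0`, `xp k = (x k)^{+,t k}`, `G k = G_{t k}(x k)`, and `F = f + h`
with minimizer `x*`. -/
theorem stmt_14 (n : ℕ) (α : ℝ) (hα : 0 < α)
    (f h : EuclideanSpace ℝ (Fin n) → ℝ)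
    (hsc : ConvexOn ℝ Set.univ (fun z => f z - α / 2 * ‖z‖ ^ 2))
    (hf : Differentiable ℝ f)
    (hconv : ConvexOn ℝ Set.univ h) (hlsc : LowerSemicontinuous h)
    (xstar : EuclideanSpace ℝ (Fin n))
    (hmin : IsMinOn (fun z => f z + h z) Set.univ xstar)
    (P : ℝ → EuclideanSpace ℝ (Fin n) → EuclideanSpace ℝ (Fin n))
    (hP : ∀ s : ℝ, 0 < s → ∀ v, IsMinOn (fun u => s * h u + ‖u - v‖ ^ 2 / 2)
      Set.univ (P s v))
    (t : ℕ → ℝ) (htpos : ∀ k, 0 < t k) (htα : ∀ k, α * t k ≤ 1)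
    (x c xp G : ℕ → EuclideanSpace ℝ (Fin n)) (R2 : ℕ → ℝ)
    (hxp : ∀ k, xp k = P (t k) (x k - t k • gradient f (x k)))
    (hG : ∀ k, G k = (t k)⁻¹ • (x k - xp k))
    (hc0 : c 0 = x 0 - α⁻¹ • G 0)
    (hR0 : R2 0 = (1 - α * t 0) * ‖G 0‖ ^ 2 / α ^ 2)
    (hline : ∀ k, f (xp k) ≤ f (x k) - t k * ⟪gradient f (x k), G k⟫
      + t k / 2 * ‖G k‖ ^ 2)
    (ha : ∀ k, 1 ≤ k →
      f (xp k) + h (xp k) ≤ (f (xp (k - 1)) + h (xp (k - 1))) - t k / 2 * ‖G k‖ ^ 2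
        ∧ ‖x k - α⁻¹ • G k - c (k - 1)‖ ^ 2 ≥ ‖G k‖ ^ 2 / α ^ 2)
    (hb1 : ∀ k, 1 ≤ k → R2 k = (1 - Real.sqrt (α * t k)) * R2 (k - 1))
    (hb2 : ∀ k, 1 ≤ k → ∀ δ : ℝ, 0 ≤ δ →
      B (c (k - 1)) (R2 (k - 1) - t k / α * ‖G k‖ ^ 2 - δ)
          ∩ B (x k - α⁻¹ • G k) ((1 - α * t k) * ‖G k‖ ^ 2 / α ^ 2 - δ)
        ⊆ B (c k) (R2 k - δ)) :
    ∀ k : ℕ,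
      xstar ∈ B (c k) (R2 k)
        ∧ ‖xstar - c k‖ ^ 2 ≤ (∏ i ∈ Finset.Icc 1 k, (1 - Real.sqrt (α * t i))) * R2 0
        ∧ (∏ i ∈ Finset.Icc 1 k, (1 - Real.sqrt (α * t i))) * R2 0
            ≤ (1 - Real.sqrt (α * Finset.inf' (Finset.range (k + 1))
                (Finset.nonempty_range_iff.mpr k.succ_ne_zero) t)) ^ k * R2 0 :=
  stmt_14_general n α hα f h hsc hf hconv xstar hmin P hP t htpos htα x c xp G R2 hxp hG hc0 hR0
    hline ha hb1 hb2
end
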